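/- arXiv:2304.12095 — 2 statements merged into one kernel-verified Lean document; each statement's English description precedes it below -/
import Mathlib

section
/- (Puncturing of MSRD codes) Suppose there exists an MSRD code 𝒞 ⊆ 𝕄 with d(𝒞) = Σ_{i=1}^{j−1} n_i + δ + 1 and dim(𝒞) = Σ_{i=j}^{ℓ} m_i n_i − δ m_j, for some j ∈ {1,…,ℓ} and 0 ≤ δ ≤ n_j − 1; write d = d(𝒞). Choose s ∈ {1,…,j} if δ > 0, and s ∈ {1,…,j−1} if δ = 0. Setting ñ_i = n_i for i ≠ s and ñ_s = n_s − 1, there exists an MSRD code with minimum sum-rank distance d − 1 in 𝕄̃ = 𝔽_q^{m_1×ñ_1} × … × 𝔽_q^{m_ℓ×ñ_ℓ}. -/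
/-!
Deleting one column of block `s` lowers the sum-rank weight of a codeword by at most one. As
`d ≥ 2`, the deletion is injective on `𝒞`, so the punctured code keeps the dimension of `𝒞` and
has minimum distance at least `d - 1`. That dimension is exactly the Singleton bound for distance
`d - 1`, with parameters `(j, δ)` if `s < j` and `(j, δ - 1)` if `s = j`, so the Singleton bound
rules out a larger minimum distance. The Singleton bound itself comes from deleting every column
of the blocks before `j` and `δ` columns of block `j`: this is injective on a code of minimum
distance larger than `∑_{i<j} n_i + δ`, and leaves a space of dimension
`∑_{i≥j} m_i n_i - δ m_j`.
-/

open Matrix Finset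

section SumRank

variable {F : Type*} [Field F] [Fintype F] {ℓ : ℕ} {m n : Fin ℓ → ℕ}

/-- The sum-rank weight of a tuple of matrices. -/
noncomputable def srk (C : ∀ i : Fin ℓ, Matrix (Fin (m i)) (Fin (n i)) F) : ℕ :=
  ∑ i, (C i).rank

/-- The weighted sum `∑ m i * rank (C i)`. -/
noncomputable def wsum (C : ∀ i : Fin ℓ, Matrix (Fin (m i)) (Fin (n i)) F) : ℕ :=
  ∑ i, m i * (C i).rank

/-- The minimum sum-rank distance of a code. -/
noncomputable def dmin (𝒞 : Submodule F (∀ i : Fin ℓ, Matrix (Fin (m i)) (Fin (n i)) F)) : ℕ :=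
  sInf {w | ∃ C ∈ 𝒞, C ≠ 0 ∧ srk C = w}

/-- The maximum sum-rank weight of a code. -/
noncomputable def maxsrk (𝒞 : Submodule F (∀ i : Fin ℓ, Matrix (Fin (m i)) (Fin (n i)) F)) : ℕ :=
  sSup {w | ∃ C ∈ 𝒞, srk C = w}

/-- An optimal rank-metric anticode in `F^(m×n)`. -/
def IsOptRkAnticode {m n : ℕ} (A : Submodule F (Matrix (Fin m) (Fin n) F)) : Prop :=
  Module.finrank F A = m * sSup {r | ∃ M ∈ A, (M : Matrix (Fin m) (Fin n) F).rank = r}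

/-- An optimal sum-rank-metric anticode. -/
def IsOptAnticode (𝒞 : Submodule F (∀ i : Fin ℓ, Matrix (Fin (m i)) (Fin (n i)) F)) : Prop :=
  Module.finrank F 𝒞 = sSup {w | ∃ C ∈ 𝒞, wsum C = w}

/-- The weight of a code. -/
noncomputable def wtCode (𝒞 : Submodule F (∀ i : Fin ℓ, Matrix (Fin (m i)) (Fin (n i)) F)) : ℕ :=
  sInf {w | ∃ A : ∀ i : Fin ℓ, Submodule F (Matrix (Fin (m i)) (Fin (n i)) F),
    (∀ i, IsOptRkAnticode (A i)) ∧ 𝒞 ≤ Submodule.pi Set.univ A ∧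
    w = maxsrk (Submodule.pi Set.univ A)}

/-- The `r`-th generalized sum-rank weight of a code. -/
noncomputable def genWt (𝒞 : Submodule F (∀ i : Fin ℓ, Matrix (Fin (m i)) (Fin (n i)) F))
    (r : ℕ) : ℕ :=
  sInf {w | ∃ 𝒟 : Submodule F (∀ i : Fin ℓ, Matrix (Fin (m i)) (Fin (n i)) F),
    𝒟 ≤ 𝒞 ∧ r ≤ Module.finrank F 𝒟 ∧ w = wtCode 𝒟}

/-- The trace-dual of a code. -/
def dualCode (𝒞 : Submodule F (∀ i : Fin ℓ, Matrix (Fin (m i)) (Fin (n i)) F)) :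
    Submodule F (∀ i : Fin ℓ, Matrix (Fin (m i)) (Fin (n i)) F) where
  carrier := {D | ∀ C ∈ 𝒞, ∑ i, Matrix.trace (D i * (C i)ᵀ) = 0}
  add_mem' := by
    intro a b ha hb C hC
    have h1 := ha C hC
    have h2 := hb C hC
    simp only [Pi.add_apply, Matrix.add_mul, Matrix.trace_add, Finset.sum_add_distrib,
      Set.mem_setOf_eq] at *
    rw [h1, h2, add_zero]
  zero_mem' := by
    intro C hC
    simp
  smul_mem' := by
    intro r a ha C hC
    have h1 := ha C hC
    simp only [Pi.smul_apply, Matrix.smul_mul, Matrix.trace_smul, ← Finset.smul_sum,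
      Set.mem_setOf_eq] at *
    rw [h1, smul_zero]

/-- The MSRD property. -/
def IsMSRD (𝒞 : Submodule F (∀ i : Fin ℓ, Matrix (Fin (m i)) (Fin (n i)) F)) : Prop :=
  ∃ (j : Fin ℓ) (δ : ℕ), δ ≤ n j - 1 ∧
    dmin 𝒞 = ∑ i ∈ Finset.Iio j, n i + δ + 1 ∧
    Module.finrank F 𝒞 = ∑ i ∈ Finset.Ici j, m i * n i - δ * m j

end SumRank

open Module

namespace Matrix

theorem rank_le_rank_submatrix_add_card_sub {K m n n₀ : Type*} [Field K] [Fintype m] [Fintype n]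
    [Fintype n₀] (A : Matrix m n K) {c : n₀ → n} (hc : Function.Injective c) :
    A.rank ≤ (A.submatrix id c).rank + (Fintype.card n - Fintype.card n₀) := by
  classical
  rw [rank_eq_finrank_span_cols, rank_eq_finrank_span_cols]
  set rest : ↥(Set.range c)ᶜ → m → K := fun j => A.col j
  have hcols : Set.range A.col ⊆ Set.range (A.submatrix id c).col ∪ Set.range rest := by
    rintro _ ⟨j, rfl⟩
    by_cases hj : j ∈ Set.range c
    · obtain ⟨j₀, rfl⟩ := hj
      exact Or.inl ⟨j₀, rfl⟩
    · exact Or.inr ⟨⟨j, hj⟩, rfl⟩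
  have hrest : Fintype.card ↥(Set.range c)ᶜ = Fintype.card n - Fintype.card n₀ := by
    rw [Fintype.card_compl_set, Set.card_range_of_injective hc]
  calc finrank K (Submodule.span K (Set.range A.col))
      ≤ finrank K (Submodule.span K (Set.range (A.submatrix id c).col) ⊔
          Submodule.span K (Set.range rest) : Submodule K (m → K)) := by
        rw [← Submodule.span_union]
        exact Submodule.finrank_mono (Submodule.span_mono hcols)
    _ ≤ _ := Submodule.finrank_add_le_finrank_add_finrank _ _
    _ ≤ _ := Nat.add_le_add_left ((finrank_range_le_card rest).trans hrest.le) _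

end Matrix

namespace Finset

theorem sum_Iio_add_sum_Ici {ι M : Type*} [Fintype ι] [LinearOrder ι] [LocallyFiniteOrderBot ι]
    [LocallyFiniteOrderTop ι] [AddCommMonoid M] (f : ι → M) (j : ι) :
    ∑ i ∈ Iio j, f i + ∑ i ∈ Ici j, f i = ∑ i, f i := by
  classical
  rw [← sum_union (disjoint_left.2 fun i hi hi' => (mem_Iio.1 hi).not_ge (mem_Ici.1 hi'))]
  congr 1
  ext i
  simp [lt_or_ge]

theorem sum_mul_update_pred_add {ι : Type*} [DecidableEq ι] {S : Finset ι} {s : ι} (hs : s ∈ S)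
    (w n : ι → ℕ) (hn : 0 < n s) :
    ∑ i ∈ S, w i * Function.update n s (n s - 1) i + w s = ∑ i ∈ S, w i * n i := by
  rw [← add_sum_erase S _ hs, ← add_sum_erase S _ hs, Function.update_self,
    sum_congr rfl fun i hi => by rw [Function.update_of_ne (ne_of_mem_erase hi)]]
  have : w s * (n s - 1) + w s = w s * n s := by
    rw [← Nat.mul_add_one, Nat.sub_add_cancel hn]
  omega

theorem sum_mul_update_of_notMem {ι : Type*} [DecidableEq ι] {S : Finset ι} {s : ι} (hs : s ∉ S)
    (w n : ι → ℕ) (v : ℕ) : ∑ i ∈ S, w i * Function.update n s v i = ∑ i ∈ S, w i * n i :=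
  sum_congr rfl fun i hi => by rw [Function.update_of_ne (ne_of_mem_of_not_mem hi hs)]

end Finset

section SumRankCodes

variable {F : Type*} [Field F] {ℓ : ℕ} {m n : Fin ℓ → ℕ}
  {𝒞 : Submodule F (∀ i : Fin ℓ, Matrix (Fin (m i)) (Fin (n i)) F)}

theorem dmin_le_srk {C : ∀ i : Fin ℓ, Matrix (Fin (m i)) (Fin (n i)) F} (hC : C ∈ 𝒞)
    (hC0 : C ≠ 0) : dmin 𝒞 ≤ srk C :=
  Nat.sInf_le ⟨C, hC, hC0, rfl⟩

theorem le_dmin (h𝒞 : 𝒞 ≠ ⊥) {w : ℕ} (hw : ∀ C ∈ 𝒞, C ≠ 0 → w ≤ srk C) : w ≤ dmin 𝒞 := by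
  obtain ⟨C, hC, hC0⟩ := Submodule.exists_mem_ne_zero_of_ne_bot h𝒞
  exact le_csInf ⟨_, C, hC, hC0, rfl⟩ fun _ ⟨C, hC, hC0, hw'⟩ => hw' ▸ hw C hC hC0

variable {n' : Fin ℓ → ℕ}

noncomputable def truncateCols (h : ∀ i, n' i ≤ n i) :
    (∀ i, Matrix (Fin (m i)) (Fin (n i)) F) →ₗ[F] ∀ i, Matrix (Fin (m i)) (Fin (n' i)) F where
  toFun C i := (C i).submatrix id (Fin.castLE (h i))
  map_add' _ _ := rfl
  map_smul' _ _ := rfl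

@[simp]
theorem truncateCols_apply (h : ∀ i, n' i ≤ n i)
    (C : ∀ i, Matrix (Fin (m i)) (Fin (n i)) F) (i : Fin ℓ) :
    truncateCols h C i = (C i).submatrix id (Fin.castLE (h i)) :=
  rfl

theorem srk_le_srk_truncateCols_add (h : ∀ i, n' i ≤ n i)
    (C : ∀ i : Fin ℓ, Matrix (Fin (m i)) (Fin (n i)) F) :
    srk C ≤ srk (truncateCols h C) + ∑ i, (n i - n' i) := by
  rw [srk, srk, ← sum_add_distrib]
  refine sum_le_sum fun i _ => ?_
  simpa using (C i).rank_le_rank_submatrix_add_card_sub (Fin.castLE_injective (h i))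

theorem finrank_map_truncateCols (h : ∀ i, n' i ≤ n i)
    (h𝒞 : ∑ i, (n i - n' i) < dmin 𝒞) :
    finrank F (𝒞.map (truncateCols h)) = finrank F 𝒞 := by
  have hinj : Disjoint 𝒞 (LinearMap.ker (truncateCols h)) := by
    refine LinearMap.disjoint_ker.2 fun C hC hC0 => ?_
    by_contra hne
    have hdC := dmin_le_srk hC hne
    have hsrk := srk_le_srk_truncateCols_add h C
    have h0 : srk (truncateCols h C) = 0 := by rw [hC0]; simp [srk]
    omega
  rw [← LinearMap.range_domRestrict]
  exact LinearMap.finrank_range_of_inj (LinearMap.injective_domRestrict_iff.2 hinj)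

theorem dmin_sub_le_dmin_map_truncateCols (h : ∀ i, n' i ≤ n i) :
    dmin 𝒞 - ∑ i, (n i - n' i) ≤ dmin (𝒞.map (truncateCols h)) := by
  obtain h𝒞 | h𝒞 := le_or_gt (dmin 𝒞) (∑ i, (n i - n' i))
  · omega
  have hbot : 𝒞.map (truncateCols h) ≠ ⊥ := by
    intro hbot
    have h𝒞bot : 𝒞 = ⊥ := by
      rw [← Submodule.finrank_eq_zero, ← finrank_map_truncateCols h h𝒞, hbot, finrank_bot]
    simp [h𝒞bot, dmin] at h𝒞
  refine le_dmin hbot ?_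
  rintro _ ⟨C, hC, rfl⟩ hC0
  have hdC := dmin_le_srk hC (by rintro rfl; exact hC0 (map_zero _))
  have hsrk := srk_le_srk_truncateCols_add h C
  omega

/-- The Singleton bound for the sum-rank metric. -/
theorem finrank_add_mul_le_of_lt_dmin {j : Fin ℓ} {δ : ℕ} (hδ : δ ≤ n j)
    (hd : ∑ i ∈ Iio j, n i + δ < dmin 𝒞) :
    finrank F 𝒞 + δ * m j ≤ ∑ i ∈ Ici j, m i * n i := by
  classical
  set t : Fin ℓ → ℕ := fun i => if i < j then 0 else if i = j then n j - δ else n i with ht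
  have htn : ∀ i, t i ≤ n i := fun i => by
    simp only [ht]
    split_ifs with _ hij
    · exact Nat.zero_le _
    · exact hij ▸ Nat.sub_le _ _
    · exact le_rfl
  have hdefect : ∑ i, (n i - t i) = ∑ i ∈ Iio j, n i + δ := by
    rw [← sum_Iio_add_sum_Ici (fun i => n i - t i) j, ← add_sum_Ioi_eq_sum_Ici]
    have hlt : ∑ i ∈ Iio j, (n i - t i) = ∑ i ∈ Iio j, n i :=
      sum_congr rfl fun i hi => by simp [ht, mem_Iio.1 hi]
    have hgt : ∑ i ∈ Ioi j, (n i - t i) = 0 :=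
      sum_eq_zero fun i hi => by simp [ht, (mem_Ioi.1 hi).not_gt, (mem_Ioi.1 hi).ne']
    rw [hlt, hgt]
    simp only [ht, lt_irrefl, if_false, if_true]
    omega
  have hcodim : ∑ i, m i * t i + δ * m j = ∑ i ∈ Ici j, m i * n i := by
    rw [← sum_Iio_add_sum_Ici (fun i => m i * t i) j, ← add_sum_Ioi_eq_sum_Ici,
      ← add_sum_Ioi_eq_sum_Ici]
    have hlt : ∑ i ∈ Iio j, m i * t i = 0 :=
      sum_eq_zero fun i hi => by simp [ht, mem_Iio.1 hi]
    have hgt : ∑ i ∈ Ioi j, m i * t i = ∑ i ∈ Ioi j, m i * n i :=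
      sum_congr rfl fun i hi => by simp [ht, (mem_Ioi.1 hi).not_gt, (mem_Ioi.1 hi).ne']
    rw [hlt, hgt]
    simp only [ht, lt_irrefl, if_false, if_true]
    rw [Nat.mul_sub, Nat.mul_comm δ]
    have : m j * δ ≤ m j * n j := Nat.mul_le_mul_left _ hδ
    omega
  calc finrank F 𝒞 + δ * m j = finrank F (𝒞.map (truncateCols htn)) + δ * m j := by
        rw [finrank_map_truncateCols htn (hdefect ▸ hd)]
    _ ≤ finrank F (∀ i, Matrix (Fin (m i)) (Fin (t i)) F) + δ * m j := by
        grw [Submodule.finrank_le]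
    _ = ∑ i ∈ Ici j, m i * n i := by
        simp [Module.finrank_pi_fintype, Module.finrank_matrix, hcodim]

theorem isMSRD_and_dmin_eq_of_le_dmin {j : Fin ℓ} {δ : ℕ} (hm : 0 < m j) (hδ : δ < n j)
    (hdim : finrank F 𝒞 + δ * m j = ∑ i ∈ Ici j, m i * n i)
    (hd : ∑ i ∈ Iio j, n i + δ + 1 ≤ dmin 𝒞) :
    IsMSRD 𝒞 ∧ dmin 𝒞 = ∑ i ∈ Iio j, n i + δ + 1 := by
  have hdmin : dmin 𝒞 = ∑ i ∈ Iio j, n i + δ + 1 := by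
    refine le_antisymm (not_lt.1 fun hlt => ?_) hd
    have := finrank_add_mul_le_of_lt_dmin (δ := δ + 1) hδ hlt
    rw [add_mul] at this
    omega
  exact ⟨⟨j, δ, by omega, hdmin, by omega⟩, hdmin⟩

end SumRankCodes

section Puncturing

variable {F : Type*} [Field F] {ℓ : ℕ} {m n : Fin ℓ → ℕ}
  {𝒞 : Submodule F (∀ i : Fin ℓ, Matrix (Fin (m i)) (Fin (n i)) F)}

noncomputable def puncture (s : Fin ℓ) : (∀ i, Matrix (Fin (m i)) (Fin (n i)) F) →ₗ[F]
    ∀ i, Matrix (Fin (m i)) (Fin (Function.update n s (n s - 1) i)) F :=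
  truncateCols (update_le_self_iff.2 (Nat.sub_le _ _))

theorem sum_sub_update_pred_le_one (n : Fin ℓ → ℕ) (s : Fin ℓ) :
    ∑ i, (n i - Function.update n s (n s - 1) i) ≤ 1 := by
  rw [sum_eq_single s (fun i _ hi => by simp [Function.update_of_ne hi]) (by simp),
    Function.update_self]
  omega

theorem finrank_map_puncture (hd : 2 ≤ dmin 𝒞) (s : Fin ℓ) :
    finrank F (𝒞.map (puncture s)) = finrank F 𝒞 :=
  finrank_map_truncateCols _ (by have := sum_sub_update_pred_le_one n s; omega)

theorem dmin_sub_one_le_dmin_map_puncture (s : Fin ℓ) :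
    dmin 𝒞 - 1 ≤ dmin (𝒞.map (puncture s)) :=
  (Nat.sub_le_sub_left (sum_sub_update_pred_le_one n s) _).trans
    (dmin_sub_le_dmin_map_truncateCols _)

theorem isMSRD_map_puncture_of_lt {s j : Fin ℓ} {δ : ℕ} (hsj : s < j) (hm : 0 < m j)
    (hns : 0 < n s) (hδ : δ < n j) (hdim : finrank F 𝒞 + δ * m j = ∑ i ∈ Ici j, m i * n i)
    (hd : dmin 𝒞 = ∑ i ∈ Iio j, n i + δ + 1) :
    IsMSRD (𝒞.map (puncture s)) ∧ dmin (𝒞.map (puncture s)) = dmin 𝒞 - 1 := by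
  classical
  have hs : s ∈ Iio j := mem_Iio.2 hsj
  have hIio : ∑ i ∈ Iio j, Function.update n s (n s - 1) i + 1 = ∑ i ∈ Iio j, n i := by
    rw [sum_update_of_mem hs, sum_eq_add_sum_sdiff_singleton_of_mem hs]
    omega
  have hIci := sum_mul_update_of_notMem (S := Ici j) (s := s) (by simpa using hsj) m n (n s - 1)
  have hnj : Function.update n s (n s - 1) j = n j := Function.update_of_ne hsj.ne' _ _
  have hd2 : 2 ≤ dmin 𝒞 := by
    have := single_le_sum (f := n) (fun _ _ => Nat.zero_le _) hs
    omega
  have hrank := finrank_map_puncture hd2 s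
  have hlow := dmin_sub_one_le_dmin_map_puncture (𝒞 := 𝒞) s
  obtain ⟨hmsrd, hdmin⟩ := isMSRD_and_dmin_eq_of_le_dmin (𝒞 := 𝒞.map (puncture s)) (j := j)
    (δ := δ) hm (by omega) (by omega) (by omega)
  exact ⟨hmsrd, by omega⟩

theorem isMSRD_map_puncture_self {j : Fin ℓ} {δ : ℕ} (hδ0 : 0 < δ) (hm : 0 < m j)
    (hδ : δ < n j) (hdim : finrank F 𝒞 + δ * m j = ∑ i ∈ Ici j, m i * n i)
    (hd : dmin 𝒞 = ∑ i ∈ Iio j, n i + δ + 1) :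
    IsMSRD (𝒞.map (puncture j)) ∧ dmin (𝒞.map (puncture j)) = dmin 𝒞 - 1 := by
  classical
  have hIio := sum_update_of_notMem (s := Iio j) (i := j) (by simp) n (n j - 1)
  have hIci := sum_mul_update_pred_add (S := Ici j) (mem_Ici.2 le_rfl) m n (by omega)
  have hjj : Function.update n j (n j - 1) j = n j - 1 := Function.update_self _ _ _
  have hδm : (δ - 1) * m j + m j = δ * m j := by
    rw [← Nat.add_one_mul, Nat.sub_add_cancel hδ0]
  have hrank := finrank_map_puncture (𝒞 := 𝒞) (by omega) j
  have hlow := dmin_sub_one_le_dmin_map_puncture (𝒞 := 𝒞) j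
  obtain ⟨hmsrd, hdmin⟩ := isMSRD_and_dmin_eq_of_le_dmin (𝒞 := 𝒞.map (puncture j)) (j := j)
    (δ := δ - 1) hm (by omega) (by omega) (by omega)
  exact ⟨hmsrd, by omega⟩

end Puncturing

theorem msrd_puncturing_general {F : Type*} [Field F] {ℓ : ℕ}
    (m n : Fin ℓ → ℕ) (hmpos : ∀ i, 0 < m i) (hnpos : ∀ i, 0 < n i)
    (𝒞 : Submodule F (∀ i : Fin ℓ, Matrix (Fin (m i)) (Fin (n i)) F))
    (j : Fin ℓ) (δ : ℕ) (hδ : δ ≤ n j - 1)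
    (hd : dmin 𝒞 = ∑ i ∈ Finset.Iio j, n i + δ + 1)
    (hdim : Module.finrank F 𝒞 = ∑ i ∈ Finset.Ici j, m i * n i - δ * m j)
    (s : Fin ℓ) (hs : if 0 < δ then s ≤ j else s < j) :
    ∃ 𝒞' : Submodule F
        (∀ i : Fin ℓ, Matrix (Fin (m i)) (Fin (Function.update n s (n s - 1) i)) F),
      IsMSRD 𝒞' ∧ dmin 𝒞' = dmin 𝒞 - 1 := by
  have hδn : δ < n j := by have := hnpos j; omega
  have hdim' : finrank F 𝒞 + δ * m j = ∑ i ∈ Ici j, m i * n i := by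
    have hle : δ * m j ≤ ∑ i ∈ Ici j, m i * n i := calc
      δ * m j ≤ m j * n j := by rw [mul_comm]; exact Nat.mul_le_mul_left _ hδn.le
      _ ≤ _ := single_le_sum (f := fun i => m i * n i) (fun _ _ => Nat.zero_le _)
        (mem_Ici.2 le_rfl)
    omega
  refine ⟨𝒞.map (puncture s), ?_⟩
  split_ifs at hs with hδ0
  · obtain hsj | rfl := hs.lt_or_eq
    · exact isMSRD_map_puncture_of_lt hsj (hmpos j) (hnpos s) hδn hdim' hd
    · exact isMSRD_map_puncture_self hδ0 (hmpos s) hδn hdim' hd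
  · exact isMSRD_map_puncture_of_lt hs (hmpos j) (hnpos s) hδn hdim' hd

/-- **Puncturing of MSRD codes.**  If there exists an MSRD code in `𝕄` with parameters `j, δ`
and minimum distance `d`, then for any `s ≤ j` (with `s < j` required when `δ = 0`),
decreasing `n s` by one yields an ambient space containing an MSRD code with minimum
sum-rank distance `d - 1`. -/
theorem msrd_puncturing {F : Type*} [Field F] [Fintype F] {ℓ : ℕ}
    (m n : Fin ℓ → ℕ) (hℓ : 0 < ℓ) (hm : ∀ i j : Fin ℓ, i ≤ j → m j ≤ m i)
    (hmpos : ∀ i, 0 < m i) (hnm : ∀ i, n i ≤ m i) (hnpos : ∀ i, 0 < n i)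
    (𝒞 : Submodule F (∀ i : Fin ℓ, Matrix (Fin (m i)) (Fin (n i)) F))
    (hMSRD : IsMSRD 𝒞) (j : Fin ℓ) (δ : ℕ) (hδ : δ ≤ n j - 1)
    (hd : dmin 𝒞 = ∑ i ∈ Finset.Iio j, n i + δ + 1)
    (hdim : Module.finrank F 𝒞 = ∑ i ∈ Finset.Ici j, m i * n i - δ * m j)
    (s : Fin ℓ) (hs : if 0 < δ then s ≤ j else s < j) :
    ∃ 𝒞' : Submodule F
        (∀ i : Fin ℓ, Matrix (Fin (m i)) (Fin (Function.update n s (n s - 1) i)) F),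
      IsMSRD 𝒞' ∧ dmin 𝒞' = dmin 𝒞 - 1 :=
  msrd_puncturing_general m n hmpos hnpos 𝒞 j δ hδ hd hdim s hs
end

section
/- (Non-existence bound for MSRD codes) Suppose ν = n_1 = … = n_ℓ and m = m_1 = … = m_ℓ, and that there exists an MSRD code 𝒞 ⊆ 𝕄 of minimum sum-rank distance d ≥ 3. Then ℓ ≤ ⌊(d−3)/ν⌋ + ⌊(q^ν − q^{ν⌊(d−3)/ν⌋ + ν − d + 3} + (q−1)(q^m + 1))/(q^ν − 1)⌋ ≤ ⌊(d−3)/ν⌋ + 1 + ⌊q^m(q−1)/(q^ν − 1)⌋. -/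
open Matrix Finset

/-!
Write `d - 3 = a ν + ρ` with `ρ < ν`, and let `Z` be the space of tuples supported on the first
`a ν + ρ` of the `n = ℓ ν` columns, so that `srk ≤ d - 3` on `Z`. Then `Z ∩ 𝒞 = 0`, and since an
MSRD code has dimension `ℓ m ν - (d - 1) m`, the quotient `W = 𝕄 / (𝒞 + Z)` has dimension `2 m`.
A tuple `T` of weight `≤ 2` that vanishes on the columns of `Z` and lies in `𝒞 + Z` is zero:
writing `T = c + z`, the codeword `c = T - z` has weight `≤ d - 1`, so `c = 0` and `T = z` lies in
`Z` while vanishing on its columns. Hence the rank-one tuples vanishing on the columns of `Z` have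
distinct nonzero images in `W`. With `ℓ = a + 1 + L` there are
`(q^m - 1) (L (q^ν - 1) + q^(ν-ρ) - 1) / (q - 1)` of them, against `q^(2m) - 1` nonzero vectors
of `W`, and this rearranges to the bound.
-/

open Module

namespace Matrix

variable {K : Type*} [Field K]

theorem rank_add_le {m n : Type*} [Fintype n] (A B : Matrix m n K) :
    (A + B).rank ≤ A.rank + B.rank := by
  rw [rank, rank, rank, mulVecLin_add]
  exact (Submodule.finrank_mono (LinearMap.range_add_le _ _)).trans
    (Submodule.finrank_add_le_finrank_add_finrank _ _)

theorem rank_neg {m n : Type*} [Fintype n] (A : Matrix m n K) : (-A).rank = A.rank := by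
  have h : (-A).mulVecLin = -A.mulVecLin := by ext; simp
  rw [rank, rank, h, LinearMap.range_neg]

theorem rank_sub_le {m n : Type*} [Fintype n] (A B : Matrix m n K) :
    (A - B).rank ≤ A.rank + B.rank := by
  simpa [sub_eq_add_neg, rank_neg] using rank_add_le A (-B)

theorem vecMulVec_ne_zero' {m n : Type*} {y : m → K} {x : n → K} (hy : y ≠ 0) (hx : x ≠ 0) :
    vecMulVec y x ≠ 0 := fun h => by
  obtain ⟨r, hr⟩ := Function.ne_iff.1 hy
  obtain ⟨c, hc⟩ := Function.ne_iff.1 hx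
  exact mul_ne_zero hr hc (by simpa [vecMulVec_apply] using congr_fun₂ h r c)

theorem card_filter_vecMulVec_eq_le [Fintype K] [DecidableEq K] {m n : Type*} [Fintype m]
    [Fintype n] [DecidableEq m] [DecidableEq n] {y₀ : m → K} {x₀ : n → K} (hy₀ : y₀ ≠ 0)
    (hx₀ : x₀ ≠ 0) :
    #{p : (m → K) × (n → K) | vecMulVec p.1 p.2 = vecMulVec y₀ x₀} ≤ Fintype.card K - 1 := by
  obtain ⟨r₀, hr₀⟩ := Function.ne_iff.1 hy₀
  obtain ⟨c₀, hc₀⟩ := Function.ne_iff.1 hx₀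
  set fiber : Finset ((m → K) × (n → K)) := {p | vecMulVec p.1 p.2 = vecMulVec y₀ x₀}
  have hentry : ∀ p ∈ fiber, ∀ r c, p.1 r * p.2 c = y₀ r * x₀ c := fun p hp r c => by
    simpa [vecMulVec_apply] using congr_fun₂ (Finset.mem_filter.1 hp).2 r c
  have hpivot : ∀ p ∈ fiber, p.1 r₀ ≠ 0 ∧ p.2 c₀ ≠ 0 := fun p hp =>
    mul_ne_zero_iff.1 (hentry p hp r₀ c₀ ▸ mul_ne_zero hr₀ hc₀)
  -- a pair in the fiber is determined by its entry at `c₀`, which is a nonzero scalar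
  calc #fiber ≤ #((Finset.univ : Finset K).erase 0) := by
        refine Finset.card_le_card_of_injOn (fun p => p.2 c₀)
          (fun p hp => Finset.mem_erase.2 ⟨(hpivot p hp).2, Finset.mem_univ _⟩) ?_
        intro p hp p' hp' (h : p.2 c₀ = p'.2 c₀)
        have h1 : p.1 = p'.1 := funext fun r => mul_right_cancel₀ (hpivot p hp).2 <| by
          rw [hentry p hp, h, hentry p' hp']
        have h2 : p.2 = p'.2 := funext fun c => mul_left_cancel₀ (hpivot p hp).1 <| by
          rw [hentry p hp, h1, hentry p' hp']
        exact Prod.ext h1 h2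
    _ = Fintype.card K - 1 := by rw [Finset.card_erase_of_mem (Finset.mem_univ _), Finset.card_univ]

end Matrix

section SumRankWeight

variable {F : Type*} [Field F] {ℓ : ℕ} {m n : Fin ℓ → ℕ}

theorem srk_sub_le (C D : ∀ i : Fin ℓ, Matrix (Fin (m i)) (Fin (n i)) F) :
    srk (C - D) ≤ srk C + srk D := by
  simp only [srk, ← Finset.sum_add_distrib]
  exact Finset.sum_le_sum fun i _ => Matrix.rank_sub_le _ _

theorem srk_single (i : Fin ℓ) (A : Matrix (Fin (m i)) (Fin (n i)) F) :
    srk (Pi.single (M := fun i => Matrix (Fin (m i)) (Fin (n i)) F) i A) = A.rank := by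
  rw [srk, Finset.sum_eq_single i (fun j _ hj => by simp [Pi.single_eq_of_ne hj]) (by simp)]
  simp

theorem eq_zero_of_srk_lt {𝒞 : Submodule F (∀ i : Fin ℓ, Matrix (Fin (m i)) (Fin (n i)) F)}
    {d : ℕ} (hdist : ∀ C ∈ 𝒞, C ≠ 0 → d ≤ srk C) {C : ∀ i : Fin ℓ, Matrix (Fin (m i)) (Fin (n i)) F}
    (hC : C ∈ 𝒞) (hlt : srk C < d) : C = 0 :=
  by_contra fun h => (hdist C hC h).not_gt hlt

end SumRankWeight

section Padding

variable {F : Type*} [Field F] {ℓ mm ν : ℕ}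

/-- Right multiplication by `colInclusion S` places the columns of a matrix at the positions `S`
and fills the other columns with zeros. -/
def colInclusion (S : Finset (Fin ν)) : Matrix S (Fin ν) F :=
  (1 : Matrix (Fin ν) (Fin ν) F).submatrix (↑) id

theorem mul_colInclusion_submatrix {S : Finset (Fin ν)} (M : Matrix (Fin mm) S F) :
    (M * (colInclusion S : Matrix S (Fin ν) F)).submatrix id Subtype.val = M := by
  rw [Matrix.submatrix_mul _ _ _ id _ Function.bijective_id, colInclusion,
    Matrix.submatrix_submatrix, Function.comp_id, Function.id_comp,
    Matrix.submatrix_one _ Subtype.val_injective, Matrix.submatrix_id_id, Matrix.mul_one]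

def padCols (S : Fin ℓ → Finset (Fin ν)) :
    (∀ i, Matrix (Fin mm) (S i) F) →ₗ[F] ∀ _ : Fin ℓ, Matrix (Fin mm) (Fin ν) F where
  toFun M i := M i * (colInclusion (S i) : Matrix (S i) (Fin ν) F)
  map_add' M N := by ext1 i; simp [Matrix.add_mul]
  map_smul' c M := by ext1 i; simp [Matrix.smul_mul]

variable (S : Fin ℓ → Finset (Fin ν))

theorem padCols_submatrix (M : ∀ i, Matrix (Fin mm) (S i) F) (i : Fin ℓ) :
    (padCols S M i).submatrix id Subtype.val = M i :=
  mul_colInclusion_submatrix (M i)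

theorem padCols_injective : Function.Injective (padCols (F := F) (mm := mm) S) :=
  fun M N h => funext fun i => by rw [← padCols_submatrix S M, h, padCols_submatrix]

theorem srk_padCols_le (M : ∀ i, Matrix (Fin mm) (S i) F) :
    srk (padCols S M) ≤ ∑ i, #(S i) :=
  Finset.sum_le_sum fun _ _ => (Matrix.rank_mul_le_right _ _).trans
    ((Matrix.rank_le_card_height _).trans (Fintype.card_coe _).le)

theorem finrank_range_padCols :
    finrank F (LinearMap.range (padCols (F := F) (mm := mm) S)) = mm * ∑ i, #(S i) := by
  rw [LinearMap.finrank_range_of_inj (padCols_injective S), finrank_pi_fintype, Finset.mul_sum]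
  simp [finrank_matrix]

variable {d : ℕ} {𝒞 : Submodule F (∀ _ : Fin ℓ, Matrix (Fin mm) (Fin ν) F)}

theorem disjoint_range_padCols (hdist : ∀ C ∈ 𝒞, C ≠ 0 → d ≤ srk C) (hS : ∑ i, #(S i) < d) :
    Disjoint 𝒞 (LinearMap.range (padCols S)) := by
  rw [Submodule.disjoint_def]
  rintro _ hC ⟨M, rfl⟩
  exact eq_zero_of_srk_lt hdist hC ((srk_padCols_le S M).trans_lt hS)

theorem finrank_quotient_sup_range_padCols (hdist : ∀ C ∈ 𝒞, C ≠ 0 → d ≤ srk C)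
    (hS : ∑ i, #(S i) < d) :
    finrank F ((∀ _ : Fin ℓ, Matrix (Fin mm) (Fin ν) F) ⧸ 𝒞 ⊔ LinearMap.range (padCols S)) +
      finrank F 𝒞 + mm * ∑ i, #(S i) = ℓ * (mm * ν) := by
  have hquot := Submodule.finrank_quotient_add_finrank (𝒞 ⊔ LinearMap.range (padCols S))
  have hsup := Submodule.finrank_sup_add_finrank_inf_eq 𝒞 (LinearMap.range (padCols S))
  rw [(disjoint_range_padCols S hdist hS).eq_bot, finrank_bot, add_zero,
    finrank_range_padCols] at hsup
  rw [finrank_pi_fintype] at hquot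
  simp only [finrank_matrix, Fintype.card_fin, finrank_self, mul_one, Finset.sum_const,
    Finset.card_univ, smul_eq_mul] at hquot
  omega

theorem eq_zero_of_mem_sup_range_padCols (hdist : ∀ C ∈ 𝒞, C ≠ 0 → d ≤ srk C)
    {C : ∀ _ : Fin ℓ, Matrix (Fin mm) (Fin ν) F} (hC : ∀ i r, ∀ c ∈ S i, C i r c = 0)
    (hwt : srk C + ∑ i, #(S i) < d) (hmem : C ∈ 𝒞 ⊔ LinearMap.range (padCols S)) : C = 0 := by
  obtain ⟨c, hc, _, ⟨M, rfl⟩, hsum⟩ := Submodule.mem_sup.1 hmem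
  have hc0 : c = 0 := eq_zero_of_srk_lt hdist hc <| calc
    srk c = srk (C - padCols S M) := by rw [← hsum, add_sub_cancel_right]
    _ ≤ srk C + srk (padCols S M) := srk_sub_le _ _
    _ < d := (Nat.add_le_add_left (srk_padCols_le S M) _).trans_lt hwt
  have hM : M = 0 := funext fun i => by
    rw [← padCols_submatrix S M i, ← zero_add (padCols S M), ← hc0, hsum]
    ext r k
    exact hC i r k k.2
  rw [← hsum, hc0, hM, map_zero, add_zero]

end Padding

section RankOneTuples

variable {F : Type*} [Field F] {ℓ mm ν : ℕ}

def rankOneTuple (t : Fin ℓ × (Fin mm → F) × (Fin ν → F)) :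
    ∀ _ : Fin ℓ, Matrix (Fin mm) (Fin ν) F :=
  Pi.single t.1 (vecMulVec t.2.1 t.2.2)

theorem srk_rankOneTuple_le (t : Fin ℓ × (Fin mm → F) × (Fin ν → F)) :
    srk (rankOneTuple t) ≤ 1 :=
  (srk_single (m := fun _ => mm) (n := fun _ => ν) _ _).trans_le (Matrix.rank_vecMulVec_le _ _)

variable [Fintype F] [DecidableEq F] (S : Fin ℓ → Finset (Fin ν))

def rankOneTriples : Finset (Fin ℓ × (Fin mm → F) × (Fin ν → F)) :=
  {t | t.2.1 ≠ 0 ∧ t.2.2 ≠ 0 ∧ ∀ c ∈ S t.1, t.2.2 c = 0}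

variable {S}

theorem rankOneTuple_apply_eq_zero {t : Fin ℓ × (Fin mm → F) × (Fin ν → F)}
    (ht : t ∈ rankOneTriples S) (i : Fin ℓ) (r : Fin mm) {c : Fin ν} (hc : c ∈ S i) :
    rankOneTuple t i r c = 0 := by
  obtain rfl | hi := eq_or_ne i t.1
  · simp [rankOneTuple, vecMulVec_apply, (Finset.mem_filter.1 ht).2.2.2 c hc]
  · simp [rankOneTuple, Pi.single_eq_of_ne hi]

theorem rankOneTuple_ne_zero {t : Fin ℓ × (Fin mm → F) × (Fin ν → F)}
    (ht : t ∈ rankOneTriples S) : rankOneTuple t ≠ 0 := fun h =>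
  Matrix.vecMulVec_ne_zero' (Finset.mem_filter.1 ht).2.1 (Finset.mem_filter.1 ht).2.2.1
    (by simpa [rankOneTuple] using congr_fun h t.1)

theorem fst_eq_and_vecMulVec_eq_of_rankOneTuple_eq {t t' : Fin ℓ × (Fin mm → F) × (Fin ν → F)}
    (ht : t ∈ rankOneTriples S) (h : rankOneTuple t = rankOneTuple t') :
    t.1 = t'.1 ∧ vecMulVec t.2.1 t.2.2 = vecMulVec t'.2.1 t'.2.2 := by
  have hi := congr_fun h t.1
  simp only [rankOneTuple, Pi.single_eq_same] at hi
  by_cases heq : t.1 = t'.1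
  · exact ⟨heq, by rwa [heq, Pi.single_eq_same] at hi⟩
  · exact absurd (by rwa [Pi.single_eq_of_ne heq] at hi)
      (Matrix.vecMulVec_ne_zero' (Finset.mem_filter.1 ht).2.1 (Finset.mem_filter.1 ht).2.2.1)

theorem le_card_rankOneTriples :
    (Fintype.card F ^ mm - 1) * ∑ i, (Fintype.card F ^ (ν - #(S i)) - 1) ≤
      #(rankOneTriples (mm := mm) (F := F) S) := by
  let extendByZero (i : Fin ℓ) (x : {c // c ∉ S i} → F) : Fin ν → F :=
    Function.extend Subtype.val x 0
  calc _ = Fintype.card (Σ i, {y : Fin mm → F // y ≠ 0} × {x : {c // c ∉ S i} → F // x ≠ 0}) := by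
        simp [Fintype.card_sigma, Finset.mul_sum]
    _ ≤ _ := by
      rw [← Finset.card_univ]
      refine Finset.card_le_card_of_injOn (fun p => (p.1, p.2.1.1, extendByZero p.1 p.2.2.1))
        (fun ⟨i, y, x⟩ _ => Finset.mem_filter.2 ⟨Finset.mem_univ _, y.2, ?_, ?_⟩) ?_
      · obtain ⟨c, hc⟩ := Function.ne_iff.1 x.2
        exact Function.ne_iff.2 ⟨c, by simpa [extendByZero, Subtype.val_injective.extend_apply]⟩
      · intro c hc
        exact Function.extend_apply' _ _ _ fun ⟨a, ha⟩ => a.2 (ha ▸ hc)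
      · rintro ⟨i, y, x⟩ - ⟨i', y', x'⟩ - h
        simp only [Prod.mk.injEq] at h
        obtain ⟨rfl, hy, hx⟩ := h
        rw [Subtype.ext hy,
          Subtype.ext (Function.extend_injective Subtype.val_injective (0 : Fin ν → F) hx)]

variable {d : ℕ} {𝒞 : Submodule F (∀ _ : Fin ℓ, Matrix (Fin mm) (Fin ν) F)}

theorem mkQ_rankOneTuple_ne_zero (hdist : ∀ C ∈ 𝒞, C ≠ 0 → d ≤ srk C)
    (hS : ∑ i, #(S i) + 1 < d) {t : Fin ℓ × (Fin mm → F) × (Fin ν → F)}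
    (ht : t ∈ rankOneTriples S) :
    (𝒞 ⊔ LinearMap.range (padCols S)).mkQ (rankOneTuple t) ≠ 0 := fun h =>
  rankOneTuple_ne_zero ht <| eq_zero_of_mem_sup_range_padCols S hdist
    (fun i r _ hc => rankOneTuple_apply_eq_zero ht i r hc)
    (by linarith [srk_rankOneTuple_le t]) ((Submodule.Quotient.mk_eq_zero _).1 h)

theorem rankOneTuple_eq_of_mkQ_eq (hdist : ∀ C ∈ 𝒞, C ≠ 0 → d ≤ srk C)
    (hS : ∑ i, #(S i) + 2 < d) {t t' : Fin ℓ × (Fin mm → F) × (Fin ν → F)}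
    (ht : t ∈ rankOneTriples S) (ht' : t' ∈ rankOneTriples S)
    (h : (𝒞 ⊔ LinearMap.range (padCols S)).mkQ (rankOneTuple t) =
      (𝒞 ⊔ LinearMap.range (padCols S)).mkQ (rankOneTuple t')) :
    rankOneTuple t = rankOneTuple t' := by
  refine sub_eq_zero.1 (eq_zero_of_mem_sup_range_padCols S hdist (fun i r c hc => ?_) ?_ ?_)
  · simp [rankOneTuple_apply_eq_zero ht i r hc, rankOneTuple_apply_eq_zero ht' i r hc]
  · linarith [srk_sub_le (rankOneTuple t) (rankOneTuple t'), srk_rankOneTuple_le t,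
      srk_rankOneTuple_le t']
  · rwa [← Submodule.Quotient.mk_eq_zero, Submodule.Quotient.mk_sub, sub_eq_zero]

/-- The tuples have distinct nonzero images in the quotient, and a rank-one matrix comes from at
most `q - 1` pairs `(y, x)`. -/
theorem card_rankOneTriples_le (hdist : ∀ C ∈ 𝒞, C ≠ 0 → d ≤ srk C) (hS : ∑ i, #(S i) + 2 < d) :
    #(rankOneTriples (mm := mm) (F := F) S) ≤ (Fintype.card F - 1) *
      (Fintype.card F ^ finrank F
        ((∀ _ : Fin ℓ, Matrix (Fin mm) (Fin ν) F) ⧸ 𝒞 ⊔ LinearMap.range (padCols S)) - 1) := by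
  classical
  set W := (∀ _ : Fin ℓ, Matrix (Fin mm) (Fin ν) F) ⧸ 𝒞 ⊔ LinearMap.range (padCols S)
  set π := (𝒞 ⊔ LinearMap.range (padCols S)).mkQ
  have hfiber : ∀ w ∈ (Finset.univ : Finset W).erase 0,
      #{t ∈ rankOneTriples S | π (rankOneTuple t) = w} ≤ Fintype.card F - 1 := by
    intro w _
    rcases Finset.eq_empty_or_nonempty {t ∈ rankOneTriples S | π (rankOneTuple t) = w}
      with h | ⟨t₀, ht₀⟩
    · simp only [h, Finset.card_empty, Nat.zero_le]
    obtain ⟨ht₀T, rfl⟩ := Finset.mem_filter.1 ht₀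
    have hsame : ∀ t, t ∈ rankOneTriples S ∧ π (rankOneTuple t) = π (rankOneTuple t₀) →
        t.1 = t₀.1 ∧ vecMulVec t.2.1 t.2.2 = vecMulVec t₀.2.1 t₀.2.2 := fun t ⟨ht, h⟩ =>
      fst_eq_and_vecMulVec_eq_of_rankOneTuple_eq ht (rankOneTuple_eq_of_mkQ_eq hdist hS ht ht₀T h)
    refine le_trans ?_ (Matrix.card_filter_vecMulVec_eq_le (Finset.mem_filter.1 ht₀T).2.1
      (Finset.mem_filter.1 ht₀T).2.2.1)
    refine Finset.card_le_card_of_injOn (fun t => t.2)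
      (fun t ht => Finset.mem_filter.2 ⟨Finset.mem_univ _, (hsame t (Finset.mem_filter.1 ht)).2⟩) ?_
    exact fun t ht t' ht' h => Prod.ext
      ((hsame t (Finset.mem_filter.1 ht)).1.trans (hsame t' (Finset.mem_filter.1 ht')).1.symm) h
  calc #(rankOneTriples S)
      ≤ (Fintype.card F - 1) * #((Finset.univ : Finset W).erase 0) :=
        Finset.card_le_mul_card_image_of_maps_to (fun t ht => Finset.mem_erase.2
          ⟨mkQ_rankOneTuple_ne_zero hdist (by omega) ht, Finset.mem_univ _⟩) _ hfiber
    _ = _ := by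
      rw [Finset.card_erase_of_mem (Finset.mem_univ _), Finset.card_univ,
        Module.card_eq_pow_finrank (K := F) (V := W)]

end RankOneTuples

section PackingBound

variable {F : Type*} [Field F] [Fintype F] {ℓ mm ν d : ℕ}
  {𝒞 : Submodule F (∀ _ : Fin ℓ, Matrix (Fin mm) (Fin ν) F)}

theorem rankOne_packing_bound (S : Fin ℓ → Finset (Fin ν)) (hdist : ∀ C ∈ 𝒞, C ≠ 0 → d ≤ srk C)
    (hS : ∑ i, #(S i) + 2 < d) :
    (Fintype.card F ^ mm - 1) * ∑ i, (Fintype.card F ^ (ν - #(S i)) - 1) ≤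
      (Fintype.card F - 1) *
        (Fintype.card F ^ (ℓ * (mm * ν) - finrank F 𝒞 - mm * ∑ i, #(S i)) - 1) := by
  classical
  have hdim := finrank_quotient_sup_range_padCols S hdist (by omega)
  calc _ ≤ #(rankOneTriples (mm := mm) (F := F) S) := le_card_rankOneTriples
    _ ≤ _ := card_rankOneTriples_le hdist hS
    _ = _ := by rw [← hdim]; congr 3; omega

end PackingBound

section Prefix

variable {ℓ ν : ℕ}

/-- The first `a * ν + ρ` columns of `n = ℓ * ν`, read block by block. -/
def prefixCols (a ρ : ℕ) (i : Fin ℓ) : Finset (Fin ν) :=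
  if (i : ℕ) < a then Finset.univ
  else if (i : ℕ) = a then Finset.univ.filter (fun c : Fin ν => (c : ℕ) < ρ)
  else ∅

theorem card_prefixCols {a ρ : ℕ} (hρ : ρ ≤ ν) (i : Fin ℓ) :
    #(prefixCols (ν := ν) a ρ i) = if (i : ℕ) < a then ν else if (i : ℕ) = a then ρ else 0 := by
  unfold prefixCols
  split_ifs <;> simp [Fin.card_filter_val_lt, hρ]

theorem sum_fin_ite_lt_eq {M : Type*} [AddCommMonoid M] (a L : ℕ) (u v w : M) :
    ∑ i : Fin (a + 1 + L), (if (i : ℕ) < a then u else if (i : ℕ) = a then v else w) =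
      a • u + v + L • w := by
  rw [Fin.sum_univ_eq_sum_range (fun t => if t < a then u else if t = a then v else w),
    Finset.sum_range_add, Finset.sum_range_succ,
    Finset.sum_congr rfl fun t ht => if_pos (Finset.mem_range.1 ht),
    Finset.sum_congr rfl fun t _ => (if_neg (by omega : ¬a + 1 + t < a)).trans
      (if_neg (by omega : a + 1 + t ≠ a))]
  simp

end Prefix

theorem ediv_le_one_add_ediv {q : ℤ} (hq : 1 < q) {ν ρ : ℕ} (hρ : ρ < ν) (mm : ℕ) :
    (q ^ ν - q ^ (ν - ρ) + (q - 1) * (q ^ mm + 1)) / (q ^ ν - 1) ≤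
      1 + q ^ mm * (q - 1) / (q ^ ν - 1) := by
  have hpos : 0 < q ^ ν - 1 := sub_pos.2 (one_lt_pow₀ hq (by omega))
  have hle : q ≤ q ^ (ν - ρ) := le_self_pow₀ hq.le (by omega)
  calc _ ≤ (q ^ mm * (q - 1) + 1 * (q ^ ν - 1)) / (q ^ ν - 1) :=
        Int.ediv_le_ediv hpos (by linarith)
    _ = _ := by rw [Int.add_mul_ediv_right _ _ hpos.ne', add_comm]

section MSRD

variable {F : Type*} [Field F] {ℓ mm ν : ℕ}

theorem IsMSRD.finrank_add_dmin_mul {𝒞 : Submodule F (∀ _ : Fin ℓ, Matrix (Fin mm) (Fin ν) F)}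
    (h𝒞 : IsMSRD 𝒞) : finrank F 𝒞 + (dmin 𝒞 - 1) * mm = ℓ * (mm * ν) := by
  obtain ⟨j, δ, hδ, hd, hdim⟩ := h𝒞
  simp only [Finset.sum_const, Fin.card_Iio, Fin.card_Ici, smul_eq_mul] at hd hdim
  beta_reduce at hδ
  have hj : (j : ℕ) < ℓ := j.2
  have hδm : δ * mm ≤ (ℓ - j) * (mm * ν) := calc
    δ * mm ≤ 1 * (mm * ν) := by rw [one_mul, mul_comm mm]; exact Nat.mul_le_mul_right _ (by omega)
    _ ≤ (ℓ - j) * (mm * ν) := Nat.mul_le_mul_right _ (by omega)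
  rw [hdim, hd, Nat.add_sub_cancel]
  zify [hδm, hj.le]
  ring

theorem rankOne_packing_bound_prefixCols [Fintype F] {a ρ L : ℕ} (hρ : ρ < ν) (hmm : 0 < mm)
    {𝒞 : Submodule F (∀ _ : Fin (a + 1 + L), Matrix (Fin mm) (Fin ν) F)}
    (hdist : ∀ C ∈ 𝒞, C ≠ 0 → a * ν + ρ + 3 ≤ srk C)
    (hdim : finrank F 𝒞 + (a * ν + ρ + 2) * mm = (a + 1 + L) * (mm * ν)) :
    L * (Fintype.card F ^ ν - 1) + (Fintype.card F ^ (ν - ρ) - 1) ≤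
      (Fintype.card F - 1) * (Fintype.card F ^ mm + 1) := by
  have hcard : ∑ i, #(prefixCols (ℓ := a + 1 + L) (ν := ν) a ρ i) = a * ν + ρ := by
    simp only [card_prefixCols hρ.le, sum_fin_ite_lt_eq, smul_eq_mul, mul_zero, add_zero]
  have hcount := rankOne_packing_bound (prefixCols a ρ) hdist (by omega)
  set q := Fintype.card F
  have hsum : ∑ i, (q ^ (ν - #(prefixCols (ℓ := a + 1 + L) (ν := ν) a ρ i)) - 1) =
      (q ^ (ν - ρ) - 1) + L * (q ^ ν - 1) := by
    rw [← smul_eq_mul, ← zero_add (q ^ (ν - ρ) - 1), ← smul_zero a, ← sum_fin_ite_lt_eq]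
    refine Finset.sum_congr rfl fun i _ => ?_
    rw [card_prefixCols hρ.le]
    split_ifs <;> simp
  have hexp : (a + 1 + L) * (mm * ν) - finrank F 𝒞 - mm * (a * ν + ρ) = 2 * mm := by
    have : (a * ν + ρ + 2) * mm = mm * (a * ν + ρ) + 2 * mm := by ring
    omega
  rw [hsum, hcard, hexp] at hcount
  have hq : 1 < q ^ mm := Nat.one_lt_pow hmm.ne' Fintype.one_lt_card
  have hsq : (q ^ mm) ^ 2 - 1 = (q ^ mm - 1) * (q ^ mm + 1) := by
    simpa [mul_comm] using Nat.sq_sub_sq (q ^ mm) 1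
  rw [mul_comm 2, pow_mul, hsq, mul_left_comm] at hcount
  rw [add_comm]
  exact Nat.le_of_mul_le_mul_left hcount (by omega)

theorem length_le_of_le_srk [Fintype F] {a ρ : ℕ} (hρ : ρ < ν) (hmm : 0 < mm)
    {𝒞 : Submodule F (∀ _ : Fin ℓ, Matrix (Fin mm) (Fin ν) F)}
    (hdist : ∀ C ∈ 𝒞, C ≠ 0 → a * ν + ρ + 3 ≤ srk C)
    (hdim : finrank F 𝒞 + (a * ν + ρ + 2) * mm = ℓ * (mm * ν)) :
    (ℓ : ℤ) ≤ a + ((Fintype.card F : ℤ) ^ ν - (Fintype.card F : ℤ) ^ (ν - ρ) +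
      ((Fintype.card F : ℤ) - 1) * ((Fintype.card F : ℤ) ^ mm + 1)) /
        ((Fintype.card F : ℤ) ^ ν - 1) := by
  have hq : 1 < Fintype.card F := Fintype.one_lt_card
  have hpow : Fintype.card F ^ (ν - ρ) ≤ Fintype.card F ^ ν := Nat.pow_le_pow_right hq.le (by omega)
  have h1 : 1 < Fintype.card F ^ ν := Nat.one_lt_pow (by omega) hq
  have h2 : 1 ≤ Fintype.card F ^ (ν - ρ) := Nat.one_le_pow _ _ (by omega)
  rcases le_or_gt ℓ a with hℓ | hℓ
  · have hnum : (0 : ℤ) ≤ (Fintype.card F : ℤ) ^ ν - (Fintype.card F : ℤ) ^ (ν - ρ) +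
        ((Fintype.card F : ℤ) - 1) * ((Fintype.card F : ℤ) ^ mm + 1) := by
      have := mul_nonneg (sub_nonneg.2 (by exact_mod_cast hq.le : (1 : ℤ) ≤ Fintype.card F))
        (by positivity : (0 : ℤ) ≤ (Fintype.card F : ℤ) ^ mm + 1)
      linarith [(by exact_mod_cast hpow : (Fintype.card F : ℤ) ^ (ν - ρ) ≤ Fintype.card F ^ ν)]
    have := Int.ediv_nonneg hnum
      (sub_nonneg.2 (by exact_mod_cast h1.le : (1 : ℤ) ≤ (Fintype.card F : ℤ) ^ ν))
    linarith [(by exact_mod_cast hℓ : (ℓ : ℤ) ≤ a)]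
  obtain ⟨L, rfl⟩ : ∃ L, ℓ = a + 1 + L := ⟨ℓ - a - 1, by omega⟩
  have hcount := rankOne_packing_bound_prefixCols hρ hmm hdist hdim
  zify [h1.le, h2, hq.le] at hcount h1
  have : (L + 1 : ℤ) ≤ ((Fintype.card F : ℤ) ^ ν - (Fintype.card F : ℤ) ^ (ν - ρ) +
      ((Fintype.card F : ℤ) - 1) * ((Fintype.card F : ℤ) ^ mm + 1)) /
        ((Fintype.card F : ℤ) ^ ν - 1) :=
    (Int.le_ediv_iff_mul_le (by linarith)).2 (by linarith)
  push_cast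
  linarith

end MSRD

theorem msrd_nonexistence_bound_general {F : Type*} [Field F] [Fintype F] {ℓ : ℕ}
    (mm ν : ℕ) (hmpos : 0 < mm) (hνpos : 0 < ν)
    (𝒞 : Submodule F (∀ _ : Fin ℓ, Matrix (Fin mm) (Fin ν) F))
    (hMSRD : IsMSRD 𝒞) (d : ℕ) (hd : d = dmin 𝒞) (hd3 : 3 ≤ d) :
    (ℓ : ℤ) ≤ ((d : ℤ) - 3) / ν +
        ((Fintype.card F : ℤ) ^ ν -
            (Fintype.card F : ℤ) ^
              (((ν : ℤ) * (((d : ℤ) - 3) / ν) + ν - d + 3).toNat) +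
          ((Fintype.card F : ℤ) - 1) * ((Fintype.card F : ℤ) ^ mm + 1)) /
        ((Fintype.card F : ℤ) ^ ν - 1) ∧
      ((d : ℤ) - 3) / ν +
        ((Fintype.card F : ℤ) ^ ν -
            (Fintype.card F : ℤ) ^
              (((ν : ℤ) * (((d : ℤ) - 3) / ν) + ν - d + 3).toNat) +
          ((Fintype.card F : ℤ) - 1) * ((Fintype.card F : ℤ) ^ mm + 1)) /
        ((Fintype.card F : ℤ) ^ ν - 1) ≤
      ((d : ℤ) - 3) / ν + 1 +
        (Fintype.card F : ℤ) ^ mm * ((Fintype.card F : ℤ) - 1) /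
        ((Fintype.card F : ℤ) ^ ν - 1) := by
  have hdist : ∀ C ∈ 𝒞, C ≠ 0 → d ≤ srk C := fun C hC hC0 => hd ▸ Nat.sInf_le ⟨C, hC, hC0, rfl⟩
  have hdim := hd ▸ hMSRD.finrank_add_dmin_mul
  obtain ⟨a, ρ, hρ, rfl⟩ : ∃ a ρ, ρ < ν ∧ d = a * ν + ρ + 3 :=
    ⟨(d - 3) / ν, (d - 3) % ν, Nat.mod_lt _ hνpos, by have := Nat.div_add_mod' (d - 3) ν; omega⟩
  have hfloor : (((a * ν + ρ + 3 : ℕ) : ℤ) - 3) / ν = a := by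
    push_cast
    rw [show (a * ν + ρ + 3 : ℤ) - 3 = ρ + a * ν by ring, Int.add_mul_ediv_right _ _ (by omega),
      Int.ediv_eq_zero_of_lt (by omega) (by omega), zero_add]
  have hexp : ((ν : ℤ) * a + ν - (a * ν + ρ + 3 : ℕ) + 3).toNat = ν - ρ := by
    push_cast
    rw [show (ν : ℤ) * a + ν - (a * ν + ρ + 3) + 3 = ν - ρ by ring]
    omega
  rw [hfloor, hexp]
  refine ⟨length_le_of_le_srk hρ hmpos hdist (by simpa using hdim), ?_⟩
  have := ediv_le_one_add_ediv (by exact_mod_cast Fintype.one_lt_card) hρ mm (q := Fintype.card F)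
  linarith

/-- **Non-existence bound for MSRD codes.**  If `n₁ = ⋯ = n_ℓ = ν`, `m₁ = ⋯ = m_ℓ = m`, and
there exists an MSRD code of minimum sum-rank distance `d ≥ 3`, then
`ℓ ≤ ⌊(d-3)/ν⌋ + ⌊(q^ν - q^{ν⌊(d-3)/ν⌋ + ν - d + 3} + (q-1)(q^m + 1))/(q^ν - 1)⌋
   ≤ ⌊(d-3)/ν⌋ + 1 + ⌊q^m (q-1)/(q^ν - 1)⌋`. -/
theorem msrd_nonexistence_bound {F : Type*} [Field F] [Fintype F] {ℓ : ℕ}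
    (mm ν : ℕ) (hℓ : 0 < ℓ) (hmpos : 0 < mm) (hνpos : 0 < ν) (hνm : ν ≤ mm)
    (𝒞 : Submodule F (∀ _ : Fin ℓ, Matrix (Fin mm) (Fin ν) F))
    (hMSRD : IsMSRD 𝒞) (d : ℕ) (hd : d = dmin 𝒞) (hd3 : 3 ≤ d) :
    (ℓ : ℤ) ≤ ((d : ℤ) - 3) / ν +
        ((Fintype.card F : ℤ) ^ ν -
            (Fintype.card F : ℤ) ^
              (((ν : ℤ) * (((d : ℤ) - 3) / ν) + ν - d + 3).toNat) +
          ((Fintype.card F : ℤ) - 1) * ((Fintype.card F : ℤ) ^ mm + 1)) /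
        ((Fintype.card F : ℤ) ^ ν - 1) ∧
      ((d : ℤ) - 3) / ν +
        ((Fintype.card F : ℤ) ^ ν -
            (Fintype.card F : ℤ) ^
              (((ν : ℤ) * (((d : ℤ) - 3) / ν) + ν - d + 3).toNat) +
          ((Fintype.card F : ℤ) - 1) * ((Fintype.card F : ℤ) ^ mm + 1)) /
        ((Fintype.card F : ℤ) ^ ν - 1) ≤
      ((d : ℤ) - 3) / ν + 1 +
        (Fintype.card F : ℤ) ^ mm * ((Fintype.card F : ℤ) - 1) /
        ((Fintype.card F : ℤ) ^ ν - 1) :=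
  msrd_nonexistence_bound_general mm ν hmpos hνpos 𝒞 hMSRD d hd hd3
end
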